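/- If p is a Labos prime with p = p_n and n ≥ 3, then every integer k with (p_{n-1}+1)/2 ≤ k ≤ (p−1)/2 is composite (i.e., p satisfies Condition 3). -/

import Mathlib

/-- `nthPrime n` is the n-th prime with 1-based indexing: p_1 = 2, p_2 = 3, ... -/
noncomputable def nthPrime (n : ℕ) : ℕ := Nat.nth Nat.Prime (n - 1)

/-- The n-th Labos prime: the smallest positive integer L with
π(L) − π(⌊L/2⌋) = n. -/
noncomputable def labos (n : ℕ) : ℕ :=
  sInf {L : ℕ | 0 < L ∧ Nat.primeCounting L - Nat.primeCounting (L / 2) = n}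

/-- A Labos prime is a number of the form L_n for some n ≥ 1. -/
def IsLabosPrime (p : ℕ) : Prop := ∃ n : ℕ, 1 ≤ n ∧ p = labos n

/-!
Write `f L = π L - π (L / 2)`, so that `L_m` is the least positive `L` with `f L = m`.
Since `f` starts at `0` and rises by at most one per step, `f L < m` for every `L < L_m`.
If `p = p_n = L_m` and a prime `k` had `p_{n-1} ≤ 2k - 1 < p`, then passing from `p` down to
`2k - 1` loses only the prime `p` in the first term but also loses the prime `k` in the second,
so `f (2k - 1) ≥ f p = m`, a contradiction.
-/

open scoped Nat.Prime

namespace Nat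

theorem exists_le_eq_of_succ_le_add_one {f : ℕ → ℕ} (hf : ∀ t, f (t + 1) ≤ f t + 1)
    {m : ℕ} (h0 : f 0 ≤ m) : ∀ {t}, m ≤ f t → ∃ L ≤ t, f L = m
  | 0, h => ⟨0, le_rfl, le_antisymm h0 h⟩
  | t + 1, h => by
    by_cases ht : m ≤ f t
    · obtain ⟨L, hL, hfL⟩ := exists_le_eq_of_succ_le_add_one hf h0 ht
      exact ⟨L, hL.trans t.le_succ, hfL⟩
    · exact ⟨t + 1, le_rfl, le_antisymm (by linarith [hf t]) h⟩

theorem primeCounting_succ (t : ℕ) : π (t + 1) = π t + if (t + 1).Prime then 1 else 0 :=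
  count_succ _ _

theorem primeCounting_succ_le_add_one (t : ℕ) : π (t + 1) ≤ π t + 1 := by
  rw [primeCounting_succ]
  split <;> omega

theorem primeCounting_of_prime {k : ℕ} (hk : k.Prime) : π k = π (k - 1) + 1 := by
  obtain ⟨j, rfl⟩ : ∃ j, k = j + 1 := ⟨k - 1, (Nat.sub_add_cancel hk.one_le).symm⟩
  rw [primeCounting_succ, if_pos hk, Nat.add_sub_cancel]

end Nat

noncomputable def labosCount (L : ℕ) : ℕ := π L - π (L / 2)

theorem labosCount_zero : labosCount 0 = 0 := by
  simp [labosCount]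

theorem labosCount_succ_le_add_one (t : ℕ) : labosCount (t + 1) ≤ labosCount t + 1 := by
  have hhalf : π (t / 2) ≤ π ((t + 1) / 2) := Nat.monotone_primeCounting (by omega)
  have hstep := Nat.primeCounting_succ_le_add_one t
  unfold labosCount
  omega

theorem labosCount_labos {m : ℕ} (hpos : 0 < labos m) : labosCount (labos m) = m :=
  (Nat.sInf_mem (Nat.nonempty_of_pos_sInf hpos)).2

theorem labosCount_lt_of_lt_labos {m L : ℕ} (hm : 1 ≤ m) (hL : L < labos m) :
    labosCount L < m := by
  by_contra! hge
  obtain ⟨L', hL'L, hL'⟩ :=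
    Nat.exists_le_eq_of_succ_le_add_one labosCount_succ_le_add_one (by simp [labosCount_zero]) hge
  have hL'pos : 0 < L' := Nat.pos_of_ne_zero fun h => by
    rw [h, labosCount_zero] at hL'
    omega
  have : labos m ≤ L' := Nat.sInf_le (⟨hL'pos, hL'⟩ : 0 < L' ∧ labosCount L' = m)
  omega

theorem labosCount_le_labosCount_two_mul_sub_one {k p : ℕ} (hk : k.Prime) (hkp : 2 * k ≤ p)
    (hπ : π p ≤ π (2 * k - 1) + 1) : labosCount p ≤ labosCount (2 * k - 1) := by
  have hk2 := hk.two_le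
  have hhalf : (2 * k - 1) / 2 = k - 1 := by omega
  have hπk := Nat.primeCounting_of_prime hk
  have hkhalf : π k ≤ π (p / 2) := Nat.monotone_primeCounting (by omega)
  unfold labosCount
  rw [hhalf]
  omega

theorem nthPrime_prime (n : ℕ) : (nthPrime n).Prime :=
  Nat.prime_nth_prime _

theorem primeCounting_nthPrime (n : ℕ) : π (nthPrime n) = n - 1 + 1 :=
  Nat.count_nth_succ_of_infinite Nat.infinite_setOfPred_prime _

theorem labos_satisfies_condition3_general (p n : ℕ)
    (hp : p = nthPrime n) (hlab : IsLabosPrime p) :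
    ∀ k : ℕ, (nthPrime (n - 1) + 1) / 2 ≤ k → k ≤ (p - 1) / 2 → ¬ k.Prime := by
  intro k hqk hkp hk
  obtain ⟨m, hm, rfl⟩ := hlab
  have hpos : 0 < labos m := hp ▸ (nthPrime_prime n).pos
  have hq_le : nthPrime (n - 1) ≤ 2 * k - 1 := by
    have hne : nthPrime (n - 1) ≠ 2 * k := fun h =>
      Nat.not_prime_mul (by norm_num) hk.ne_one (h ▸ nthPrime_prime (n - 1))
    omega
  have hπ : π (labos m) ≤ π (2 * k - 1) + 1 :=
    calc π (labos m) = π (nthPrime n) := by rw [hp]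
      _ ≤ π (nthPrime (n - 1)) + 1 := by rw [primeCounting_nthPrime, primeCounting_nthPrime]; omega
      _ ≤ π (2 * k - 1) + 1 := by gcongr; exact Nat.monotone_primeCounting hq_le
  have hge := labosCount_le_labosCount_two_mul_sub_one hk (by omega) hπ
  have hlt := labosCount_lt_of_lt_labos hm (show 2 * k - 1 < labos m by omega)
  rw [labosCount_labos hpos] at hge
  omega

/-- If p is a Labos prime with p = p_n and n ≥ 3, then every integer k with
(p_{n-1}+1)/2 ≤ k ≤ (p−1)/2 is composite (Condition 3). -/
theorem labos_satisfies_condition3 (p n : ℕ) (hn : 3 ≤ n)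
    (hp : p = nthPrime n) (hlab : IsLabosPrime p) :
    ∀ k : ℕ, (nthPrime (n - 1) + 1) / 2 ≤ k → k ≤ (p - 1) / 2 → ¬ k.Prime :=
  labos_satisfies_condition3_general p n hp hlab
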